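/- arXiv:2207.12417 — 4 statements merged into one kernel-verified Lean document; each statement's English description precedes it below -/
import Mathlib

section
/- Under assumptions (i) and (ii), the identity ((x⊗u)w)(y⊗v) = (x⊗u)(w(y⊗v)) holds for all parity-homogeneous x ∈ K ⊕ G_{±1}, y ∈ K ⊕ G_{∓1} and all u, v, w ∈ U₀. -/
/-!
Each identity is linear in `w`, so it suffices to let `w` range over generators `z ∈ g` and
close up under sums, scalars and products; products need the case `x ∈ K` (associativity of
the action of `U₀` on `U_{±1}`) alongside. For a homogeneous generator `z`, assumption (ii) with
`u = 1` computes `z(y ⊗ v) = ⟦z,y⟧ ⊗ v + (−1)^{|y||z|} y ⊗ zv`, and the general assumption (ii)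
says precisely that `(x ⊗ uz)(y ⊗ v)` is `x ⊗ u` applied to this.
-/

open scoped TensorProduct

/-- The right action of `U₀` on `U_{±1} = G ⊗ U₀`, determined by bilinearity and the
rule `(x ⊗ u)v = x ⊗ (uv)`. -/
noncomputable def rmul {K U0 G : Type*} [Field K] [Ring U0] [Algebra K U0]
    [AddCommGroup G] [Module K G] (z : G ⊗[K] U0) (v : U0) : G ⊗[K] U0 :=
  TensorProduct.map LinearMap.id (LinearMap.mulRight K v) z

/-- The total-parity components of `U_{±1} = G ⊗ U₀`: the parity-`s` component is spanned by
the tensors `x ⊗ u` with `x` of parity `p` in `G`, `u` of parity `t` in `U₀` and `p + t = s`. -/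
def tpar {K U0 G : Type*} [Field K] [Ring U0] [Algebra K U0]
    [AddCommGroup G] [Module K G] (q : ZMod 2 → Submodule K G)
    (p0 : ZMod 2 → Submodule K U0) (s : ZMod 2) : Submodule K (G ⊗[K] U0) :=
  Submodule.span K {z | ∃ p t, p + t = s ∧ ∃ x ∈ q p, ∃ u ∈ p0 t, z = x ⊗ₜ[K] u}

section

variable (K : Type*) [Field K] [CharZero K]
  -- (a) a unital associative `ℤ/2ℤ`-graded `K`-algebra `U₀`,
  (U0 : Type*) [Ring U0] [Algebra K U0]
  (p0 : ZMod 2 → Submodule K U0) [GradedAlgebra p0]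
  -- generated as a unital algebra by a graded subspace `g ⊆ U₀`,
  (g : Submodule K U0)
  -- (b) `ℤ/2ℤ`-graded `K`-vector spaces `G₁` and `G₋₁`; `U₁ := G₁ ⊗ U₀`, `U₋₁ := G₋₁ ⊗ U₀`,
  (G1 Gm : Type*) [AddCommGroup G1] [Module K G1] [AddCommGroup Gm] [Module K Gm]
  (q1 : ZMod 2 → Submodule K G1) (qm : ZMod 2 → Submodule K Gm)
  [DirectSum.Decomposition q1] [DirectSum.Decomposition qm]
  -- (c) the products `U₁ × U₋₁ → U₀`, `U₋₁ × U₁ → U₀`, `U₀ × U_{±1} → U_{±1}`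
  --     (the products `U_{±1} × U₀ → U_{±1}` are given by `rmul`),
  (mpm : G1 ⊗[K] U0 →ₗ[K] Gm ⊗[K] U0 →ₗ[K] U0)
  (mmp : Gm ⊗[K] U0 →ₗ[K] G1 ⊗[K] U0 →ₗ[K] U0)
  (a0p : U0 →ₗ[K] G1 ⊗[K] U0 →ₗ[K] G1 ⊗[K] U0)
  (a0m : U0 →ₗ[K] Gm ⊗[K] U0 →ₗ[K] Gm ⊗[K] U0)
  -- (d) parity-preserving brackets `⟦−,−⟧ : g × G_{±1} → G_{±1}`
  (b1 : g →ₗ[K] G1 →ₗ[K] G1)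
  (bm : g →ₗ[K] Gm →ₗ[K] Gm)

/-- hypotheses of the context: `g` is a graded subspace generating `U₀`; the products and
brackets are parity-preserving; `1 ∈ U₀` acts as the identity on `U_{±1}`;
assumptions (i) and (ii). -/
structure ContextHyps : Prop where
  g_graded : ∀ x ∈ g, ∀ p : ZMod 2, (DirectSum.decompose p0 x p : U0) ∈ g
  g_gen : Algebra.adjoin K (g : Set U0) = ⊤
  mpm_par : ∀ (s t : ZMod 2) (z : G1 ⊗[K] U0) (w : Gm ⊗[K] U0),
    z ∈ tpar q1 p0 s → w ∈ tpar qm p0 t → mpm z w ∈ p0 (s + t)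
  mmp_par : ∀ (s t : ZMod 2) (z : Gm ⊗[K] U0) (w : G1 ⊗[K] U0),
    z ∈ tpar qm p0 s → w ∈ tpar q1 p0 t → mmp z w ∈ p0 (s + t)
  a0p_par : ∀ (s t : ZMod 2) (u : U0) (z : G1 ⊗[K] U0),
    u ∈ p0 s → z ∈ tpar q1 p0 t → a0p u z ∈ tpar q1 p0 (s + t)
  a0m_par : ∀ (s t : ZMod 2) (u : U0) (z : Gm ⊗[K] U0),
    u ∈ p0 s → z ∈ tpar qm p0 t → a0m u z ∈ tpar qm p0 (s + t)
  a0p_one : ∀ z : G1 ⊗[K] U0, a0p 1 z = z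
  a0m_one : ∀ z : Gm ⊗[K] U0, a0m 1 z = z
  b1_par : ∀ (t p : ZMod 2) (z : g) (x : G1),
    (z : U0) ∈ p0 t → x ∈ q1 p → b1 z x ∈ q1 (t + p)
  bm_par : ∀ (t p : ZMod 2) (z : g) (x : Gm),
    (z : U0) ∈ p0 t → x ∈ qm p → bm z x ∈ qm (t + p)
  -- assumption (i): `x(y ⊗ v) = (xy)v`
  i_pm : ∀ (x : G1) (y : Gm) (v : U0),
    mpm (x ⊗ₜ[K] 1) (y ⊗ₜ[K] v) = mpm (x ⊗ₜ[K] 1) (y ⊗ₜ[K] 1) * v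
  i_mp : ∀ (x : Gm) (y : G1) (v : U0),
    mmp (x ⊗ₜ[K] 1) (y ⊗ₜ[K] v) = mmp (x ⊗ₜ[K] 1) (y ⊗ₜ[K] 1) * v
  -- assumption (ii):
  -- `(x ⊗ (uz))(y ⊗ v) = (x ⊗ u)(⟦z,y⟧ ⊗ v) + (−1)^{|y||z|}(x ⊗ u)(y ⊗ (zv))`
  ii_pm : ∀ (t s : ZMod 2) (z : g), (z : U0) ∈ p0 t → ∀ y : Gm, y ∈ qm s →
    ∀ (x : G1) (u v : U0),
    mpm (x ⊗ₜ[K] (u * (z : U0))) (y ⊗ₜ[K] v)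
      = mpm (x ⊗ₜ[K] u) (bm z y ⊗ₜ[K] v)
        + ((-1 : K) ^ (s * t).val) • mpm (x ⊗ₜ[K] u) (y ⊗ₜ[K] ((z : U0) * v))
  ii_mp : ∀ (t s : ZMod 2) (z : g), (z : U0) ∈ p0 t → ∀ y : G1, y ∈ q1 s →
    ∀ (x : Gm) (u v : U0),
    mmp (x ⊗ₜ[K] (u * (z : U0))) (y ⊗ₜ[K] v)
      = mmp (x ⊗ₜ[K] u) (b1 z y ⊗ₜ[K] v)
        + ((-1 : K) ^ (s * t).val) • mmp (x ⊗ₜ[K] u) (y ⊗ₜ[K] ((z : U0) * v))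
  ii_0p : ∀ (t s : ZMod 2) (z : g), (z : U0) ∈ p0 t → ∀ y : G1, y ∈ q1 s →
    ∀ u v : U0,
    a0p (u * (z : U0)) (y ⊗ₜ[K] v)
      = a0p u (b1 z y ⊗ₜ[K] v)
        + ((-1 : K) ^ (s * t).val) • a0p u (y ⊗ₜ[K] ((z : U0) * v))
  ii_0m : ∀ (t s : ZMod 2) (z : g), (z : U0) ∈ p0 t → ∀ y : Gm, y ∈ qm s →
    ∀ u v : U0,
    a0m (u * (z : U0)) (y ⊗ₜ[K] v)
      = a0m u (bm z y ⊗ₜ[K] v)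
        + ((-1 : K) ^ (s * t).val) • a0m u (y ⊗ₜ[K] ((z : U0) * v))

end

open TensorProduct

theorem DirectSum.sum_coe_decompose {ι K M : Type*} [DecidableEq ι] [Fintype ι] [Semiring K]
    [AddCommMonoid M] [Module K M] (ℳ : ι → Submodule K M) [DirectSum.Decomposition ℳ]
    (x : M) : ∑ i, (DirectSum.decompose ℳ x i : M) = x := by
  conv_rhs => rw [← (DirectSum.decompose ℳ).symm_apply_apply x,
    ← DirectSum.sum_univ_of (DirectSum.decompose ℳ x)]
  simp only [DirectSum.decompose_symm_sum, DirectSum.decompose_symm_of]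

@[simp]
theorem rmul_tmul {K U0 G : Type*} [Field K] [Ring U0] [Algebra K U0] [AddCommGroup G]
    [Module K G] (x : G) (u v : U0) : rmul (x ⊗ₜ[K] u) v = x ⊗ₜ (u * v) :=
  rfl

section MoveAcross

variable {K U0 M A : Type*} [CommRing K] [Ring U0] [Algebra K U0]
  [AddCommGroup M] [Module K M] [AddCommGroup A] [Module K A]

theorem apply_mul_eq_apply_act_of_mem_adjoin {s : Set U0} (act : U0 →ₗ[K] M →ₗ[K] M)
    (Φ : U0 →ₗ[K] M →ₗ[K] A) (act_one : ∀ ζ, act 1 ζ = ζ)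
    (act_gen : ∀ z ∈ s, ∀ u ζ, act (u * z) ζ = act u (act z ζ))
    (Φ_gen : ∀ z ∈ s, ∀ u ζ, Φ (u * z) ζ = Φ u (act z ζ))
    {w : U0} (hw : w ∈ Algebra.adjoin K s) (u : U0) (ζ : M) :
    Φ (u * w) ζ = Φ u (act w ζ) := by
  suffices (∀ u ζ, act (u * w) ζ = act u (act w ζ)) ∧ ∀ u ζ, Φ (u * w) ζ = Φ u (act w ζ) from
    this.2 u ζ
  induction hw using Algebra.adjoin_induction with
  | mem z hz => exact ⟨act_gen z hz, Φ_gen z hz⟩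
  | algebraMap c => simp [Algebra.algebraMap_eq_smul_one, act_one]
  | add a b _ _ ha hb =>
    constructor <;> intro u ζ <;>
      simp only [mul_add, map_add, LinearMap.add_apply, ha.1, ha.2, hb.1, hb.2]
  | mul a b _ _ ha hb =>
    constructor <;> intro u ζ
    · rw [← mul_assoc, hb.1, ha.1, hb.1]
    · rw [← mul_assoc, hb.2, ha.2, hb.1]

end MoveAcross

section TwistedLeibniz

variable {K U0 G A : Type*} [CommRing K] [Ring U0] [Algebra K U0]
  [AddCommGroup G] [Module K G] [AddCommGroup A] [Module K A]
  (p0 : ZMod 2 → Submodule K U0) [DirectSum.Decomposition p0] {g : Submodule K U0}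
  (q : ZMod 2 → Submodule K G) [DirectSum.Decomposition q]

/-- Assumption (ii) for a bilinear map `Φ(u, y ⊗ v)`, which stands for `(x ⊗ u)(y ⊗ v)` with
`x ∈ K ⊕ G_{∓1}` fixed. -/
def TwistedLeibniz (b : g →ₗ[K] G →ₗ[K] G) (Φ : U0 →ₗ[K] G ⊗[K] U0 →ₗ[K] A) : Prop :=
  ∀ (t s : ZMod 2) (z : g), (z : U0) ∈ p0 t → ∀ y ∈ q s, ∀ u v : U0,
    Φ (u * z) (y ⊗ₜ v) = Φ u (b z y ⊗ₜ v) + ((-1 : K) ^ (s * t).val) • Φ u (y ⊗ₜ (z * v))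

variable {p0 q}

theorem TwistedLeibniz.apply_mul_eq_apply_act_of_mem
    (hg : ∀ x ∈ g, ∀ p : ZMod 2, (DirectSum.decompose p0 x p : U0) ∈ g)
    {b : g →ₗ[K] G →ₗ[K] G} {act : U0 →ₗ[K] G ⊗[K] U0 →ₗ[K] G ⊗[K] U0}
    {Φ : U0 →ₗ[K] G ⊗[K] U0 →ₗ[K] A} (hact : TwistedLeibniz p0 q b act)
    (act_one : ∀ ζ, act 1 ζ = ζ) (hΦ : TwistedLeibniz p0 q b Φ)
    {z : U0} (hz : z ∈ g) (u : U0) (ζ : G ⊗[K] U0) :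
    Φ (u * z) ζ = Φ u (act z ζ) := by
  have homogeneous : ∀ {t s} (z : g), (z : U0) ∈ p0 t → ∀ y ∈ q s, ∀ v,
      Φ (u * z) (y ⊗ₜ v) = Φ u (act z (y ⊗ₜ v)) := by
    intro t s z hz y hy v
    have act_z := hact t s z hz y hy 1 v
    rw [one_mul, act_one, act_one] at act_z
    rw [act_z, map_add, map_smul, hΦ t s z hz y hy u v]
  rw [← DirectSum.sum_coe_decompose p0 z]
  simp only [Finset.mul_sum, map_sum, LinearMap.sum_apply]
  refine Finset.sum_congr rfl fun t _ => ?_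
  induction ζ using TensorProduct.induction_on with
  | zero => simp only [map_zero]
  | add ζ ζ' h h' => rw [map_add, map_add, h, h', map_add]
  | tmul y v =>
    induction y using DirectSum.Decomposition.inductionOn q with
    | zero => simp only [zero_tmul, map_zero]
    | homogeneous y => exact homogeneous ⟨_, hg z hz t⟩ (SetLike.coe_mem _) y y.2 v
    | add y y' h h' => simp only [add_tmul, map_add, h, h']

theorem TwistedLeibniz.apply_mul_eq_apply_act
    (hgen : Algebra.adjoin K (g : Set U0) = ⊤)
    (hg : ∀ x ∈ g, ∀ p : ZMod 2, (DirectSum.decompose p0 x p : U0) ∈ g)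
    {b : g →ₗ[K] G →ₗ[K] G} {act : U0 →ₗ[K] G ⊗[K] U0 →ₗ[K] G ⊗[K] U0}
    {Φ : U0 →ₗ[K] G ⊗[K] U0 →ₗ[K] A} (hact : TwistedLeibniz p0 q b act)
    (act_one : ∀ ζ, act 1 ζ = ζ) (hΦ : TwistedLeibniz p0 q b Φ)
    (w u : U0) (ζ : G ⊗[K] U0) :
    Φ (u * w) ζ = Φ u (act w ζ) :=
  apply_mul_eq_apply_act_of_mem_adjoin act Φ act_one
    (fun _ hz => TwistedLeibniz.apply_mul_eq_apply_act_of_mem hg hact act_one hact hz)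
    (fun _ hz => TwistedLeibniz.apply_mul_eq_apply_act_of_mem hg hact act_one hΦ hz)
    (hgen ▸ Algebra.mem_top) u ζ

end TwistedLeibniz

theorem move_w_identity_of_contextHyps_general
    (K : Type*) [Field K]
    (U0 : Type*) [Ring U0] [Algebra K U0]
    (p0 : ZMod 2 → Submodule K U0) [GradedAlgebra p0]
    (g : Submodule K U0)
    (G1 Gm : Type*) [AddCommGroup G1] [Module K G1] [AddCommGroup Gm] [Module K Gm]
    (q1 : ZMod 2 → Submodule K G1) (qm : ZMod 2 → Submodule K Gm)
    [DirectSum.Decomposition q1] [DirectSum.Decomposition qm]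
    (mpm : G1 ⊗[K] U0 →ₗ[K] Gm ⊗[K] U0 →ₗ[K] U0)
    (mmp : Gm ⊗[K] U0 →ₗ[K] G1 ⊗[K] U0 →ₗ[K] U0)
    (a0p : U0 →ₗ[K] G1 ⊗[K] U0 →ₗ[K] G1 ⊗[K] U0)
    (a0m : U0 →ₗ[K] Gm ⊗[K] U0 →ₗ[K] Gm ⊗[K] U0)
    (b1 : g →ₗ[K] G1 →ₗ[K] G1)
    (bm : g →ₗ[K] Gm →ₗ[K] Gm)
    (hyp : ContextHyps K U0 p0 g G1 Gm q1 qm mpm mmp a0p a0m b1 bm) :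
    -- case x ∈ G₁, y ∈ G₋₁
    (∀ x : G1, (∃ s, x ∈ q1 s) → ∀ y : Gm, (∃ s, y ∈ qm s) → ∀ u v w : U0,
      mpm (x ⊗ₜ[K] (u * w)) (y ⊗ₜ[K] v) = mpm (x ⊗ₜ[K] u) (a0m w (y ⊗ₜ[K] v))) ∧
    -- case x ∈ G₋₁, y ∈ G₁
    (∀ x : Gm, (∃ s, x ∈ qm s) → ∀ y : G1, (∃ s, y ∈ q1 s) → ∀ u v w : U0,
      mmp (x ⊗ₜ[K] (u * w)) (y ⊗ₜ[K] v) = mmp (x ⊗ₜ[K] u) (a0p w (y ⊗ₜ[K] v))) ∧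
    -- case x = c ∈ K, y ∈ G₁
    (∀ (c : K) (y : G1), (∃ s, y ∈ q1 s) → ∀ u v w : U0,
      a0p ((c • u) * w) (y ⊗ₜ[K] v) = a0p (c • u) (a0p w (y ⊗ₜ[K] v))) ∧
    -- case x = c ∈ K, y ∈ G₋₁
    (∀ (c : K) (y : Gm), (∃ s, y ∈ qm s) → ∀ u v w : U0,
      a0m ((c • u) * w) (y ⊗ₜ[K] v) = a0m (c • u) (a0m w (y ⊗ₜ[K] v))) ∧
    -- case x ∈ G₁, y = c ∈ K
    (∀ x : G1, (∃ s, x ∈ q1 s) → ∀ (c : K) (u v w : U0),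
      rmul (x ⊗ₜ[K] (u * w)) (c • v) = rmul (x ⊗ₜ[K] u) (w * (c • v))) ∧
    -- case x ∈ G₋₁, y = c ∈ K
    (∀ x : Gm, (∃ s, x ∈ qm s) → ∀ (c : K) (u v w : U0),
      rmul (x ⊗ₜ[K] (u * w)) (c • v) = rmul (x ⊗ₜ[K] u) (w * (c • v))) ∧
    -- case x = c ∈ K, y = c' ∈ K
    (∀ (c c' : K) (u v w : U0),
      ((c • u) * w) * (c' • v) = (c • u) * (w * (c' • v))) := by
  obtain ⟨hg, hgen, -, -, -, -, hp1, hm1, -, -, -, -, hpm, hmp, hp, hm⟩ := hyp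
  refine ⟨fun x _ y _ u v w => ?_, fun x _ y _ u v w => ?_,
    fun c y _ u v w => TwistedLeibniz.apply_mul_eq_apply_act hgen hg hp hp1 hp w (c • u) (y ⊗ₜ v),
    fun c y _ u v w => TwistedLeibniz.apply_mul_eq_apply_act hgen hg hm hm1 hm w (c • u) (y ⊗ₜ v),
    fun x _ c u v w => by simp only [rmul_tmul, mul_assoc],
    fun x _ c u v w => by simp only [rmul_tmul, mul_assoc],
    fun c c' u v w => mul_assoc _ _ _⟩
  · exact TwistedLeibniz.apply_mul_eq_apply_act (Φ := mpm.comp (TensorProduct.mk K G1 U0 x))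
      hgen hg hm hm1 (fun t s z hz y hy u v => hpm t s z hz y hy x u v) w u (y ⊗ₜ v)
  · exact TwistedLeibniz.apply_mul_eq_apply_act (Φ := mmp.comp (TensorProduct.mk K Gm U0 x))
      hgen hg hp hp1 (fun t s z hz y hy u v => hmp t s z hz y hy x u v) w u (y ⊗ₜ v)

/-- Under assumptions (i) and (ii), the identity
`((x⊗u)w)(y⊗v) = (x⊗u)(w(y⊗v))` holds for all parity-homogeneous `x ∈ K ⊕ G_{±1}`,
`y ∈ K ⊕ G_{∓1}` and all `u, v, w ∈ U₀` (stated case by case according to whether `x` and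
`y` lie in `K` or in `G_{±1}`; elements of `K` act by scalar multiplication and have
parity `0`). -/
theorem move_w_identity_of_contextHyps
    (K : Type*) [Field K] [CharZero K]
    (U0 : Type*) [Ring U0] [Algebra K U0]
    (p0 : ZMod 2 → Submodule K U0) [GradedAlgebra p0]
    (g : Submodule K U0)
    (G1 Gm : Type*) [AddCommGroup G1] [Module K G1] [AddCommGroup Gm] [Module K Gm]
    (q1 : ZMod 2 → Submodule K G1) (qm : ZMod 2 → Submodule K Gm)
    [DirectSum.Decomposition q1] [DirectSum.Decomposition qm]
    (mpm : G1 ⊗[K] U0 →ₗ[K] Gm ⊗[K] U0 →ₗ[K] U0)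
    (mmp : Gm ⊗[K] U0 →ₗ[K] G1 ⊗[K] U0 →ₗ[K] U0)
    (a0p : U0 →ₗ[K] G1 ⊗[K] U0 →ₗ[K] G1 ⊗[K] U0)
    (a0m : U0 →ₗ[K] Gm ⊗[K] U0 →ₗ[K] Gm ⊗[K] U0)
    (b1 : g →ₗ[K] G1 →ₗ[K] G1)
    (bm : g →ₗ[K] Gm →ₗ[K] Gm)
    (hyp : ContextHyps K U0 p0 g G1 Gm q1 qm mpm mmp a0p a0m b1 bm) :
    -- case x ∈ G₁, y ∈ G₋₁
    (∀ x : G1, (∃ s, x ∈ q1 s) → ∀ y : Gm, (∃ s, y ∈ qm s) → ∀ u v w : U0,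
      mpm (x ⊗ₜ[K] (u * w)) (y ⊗ₜ[K] v) = mpm (x ⊗ₜ[K] u) (a0m w (y ⊗ₜ[K] v))) ∧
    -- case x ∈ G₋₁, y ∈ G₁
    (∀ x : Gm, (∃ s, x ∈ qm s) → ∀ y : G1, (∃ s, y ∈ q1 s) → ∀ u v w : U0,
      mmp (x ⊗ₜ[K] (u * w)) (y ⊗ₜ[K] v) = mmp (x ⊗ₜ[K] u) (a0p w (y ⊗ₜ[K] v))) ∧
    -- case x = c ∈ K, y ∈ G₁
    (∀ (c : K) (y : G1), (∃ s, y ∈ q1 s) → ∀ u v w : U0,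
      a0p ((c • u) * w) (y ⊗ₜ[K] v) = a0p (c • u) (a0p w (y ⊗ₜ[K] v))) ∧
    -- case x = c ∈ K, y ∈ G₋₁
    (∀ (c : K) (y : Gm), (∃ s, y ∈ qm s) → ∀ u v w : U0,
      a0m ((c • u) * w) (y ⊗ₜ[K] v) = a0m (c • u) (a0m w (y ⊗ₜ[K] v))) ∧
    -- case x ∈ G₁, y = c ∈ K
    (∀ x : G1, (∃ s, x ∈ q1 s) → ∀ (c : K) (u v w : U0),
      rmul (x ⊗ₜ[K] (u * w)) (c • v) = rmul (x ⊗ₜ[K] u) (w * (c • v))) ∧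
    -- case x ∈ G₋₁, y = c ∈ K
    (∀ x : Gm, (∃ s, x ∈ qm s) → ∀ (c : K) (u v w : U0),
      rmul (x ⊗ₜ[K] (u * w)) (c • v) = rmul (x ⊗ₜ[K] u) (w * (c • v))) ∧
    -- case x = c ∈ K, y = c' ∈ K
    (∀ (c c' : K) (u v w : U0),
      ((c • u) * w) * (c' • v) = (c • u) * (w * (c' • v))) :=
  move_w_identity_of_contextHyps_general K U0 p0 g G1 Gm q1 qm mpm mmp a0p a0m b1 bm hyp
end

section
/- Assume additionally (iii): z(xy) = ⟦z,x⟧y + (−1)^{|z||x|} x⟦z,y⟧ + (−1)^{|z|(|x|+|y|)}(xy)z for all parity-homogeneous z ∈ g, x ∈ G_{±1}, y ∈ G_{∓1} (an identity in U₀, where ⟦z,x⟧y and x⟦z,y⟧ use the products U_{±1} × U_{∓1} → U₀). Then (u(y⊗1))v = u(y ⊗ v) and (u(x⊗1))(y ⊗ v) = u((xy)v) for all u, v ∈ U₀ and parity-homogeneous x ∈ K ⊕ G_{±1}, y ∈ K ⊕ G_{∓1}. -/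
open scoped TensorProduct

lemma sgn_mul_sgn {K : Type*} [Field K] (a b : ZMod 2) :
    ((-1 : K) ^ a.val) * ((-1 : K) ^ b.val) = (-1 : K) ^ ((a + b).val) := by
  rw [← pow_add, ZMod.val_add, neg_one_pow_eq_pow_mod_two (R := K) (n := a.val + b.val)]

lemma adjoin_ind {K U0 : Type*} [Field K] [Ring U0] [Algebra K U0]
    (g : Submodule K U0) (hg : Algebra.adjoin K (g : Set U0) = ⊤)
    (P : U0 → Prop) (h0 : P 0) (hadd : ∀ a b, P a → P b → P (a + b))
    (hsmul : ∀ (c : K) (a : U0), P a → P (c • a)) (h1 : P 1)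
    (hmul : ∀ u, P u → ∀ z ∈ g, P (u * z)) : ∀ u, P u := by
  have hT : ∀ v ∈ Algebra.adjoin K (g : Set U0), ∀ u, P u → P (u * v) := by
    intro v hv
    induction hv using Algebra.adjoin_induction with
    | mem z hz => exact fun u hu => hmul u hu z hz
    | algebraMap c =>
        intro u hu
        rw [Algebra.algebraMap_eq_smul_one, mul_smul_comm, mul_one]
        exact hsmul c u hu
    | add a b ha hb iha ihb =>
        intro u hu; rw [mul_add]; exact hadd _ _ (iha u hu) (ihb u hu)
    | mul a b ha hb iha ihb =>
        intro u hu; rw [← mul_assoc]; exact ihb _ (iha u hu)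
  intro u
  have := hT u (by rw [hg]; trivial) 1 h1
  rwa [one_mul] at this

lemma homog_ind {K U0 : Type*} [Field K] [Ring U0] [Algebra K U0]
    (p0 : ZMod 2 → Submodule K U0) [GradedAlgebra p0]
    (g : Submodule K U0)
    (hgg : ∀ x ∈ g, ∀ p : ZMod 2, (DirectSum.decompose p0 x p : U0) ∈ g)
    (P : U0 → Prop) (h0 : P 0) (hadd : ∀ a b, P a → P b → P (a + b))
    (hc : ∀ (t : ZMod 2), ∀ w ∈ g, w ∈ p0 t → P w) :
    ∀ z ∈ g, P z := by
  intro z hz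
  classical
  rw [← DirectSum.sum_support_decompose p0 z]
  apply Finset.sum_induction _ P hadd h0
  intro i _
  exact hc i _ (hgg z hz i) (SetLike.coe_mem _)

lemma main_aux {K U0 : Type*} [Field K] [Ring U0] [Algebra K U0]
    (p0 : ZMod 2 → Submodule K U0) [GradedAlgebra p0]
    (g : Submodule K U0)
    {A B : Type*} [AddCommGroup A] [Module K A] [AddCommGroup B] [Module K B]
    (qA : ZMod 2 → Submodule K A) (qB : ZMod 2 → Submodule K B)
    (m : A ⊗[K] U0 →ₗ[K] B ⊗[K] U0 →ₗ[K] U0)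
    (a0 : U0 →ₗ[K] A ⊗[K] U0 →ₗ[K] A ⊗[K] U0)
    (bA : g →ₗ[K] A →ₗ[K] A) (bB : g →ₗ[K] B →ₗ[K] B)
    (hgg : ∀ x ∈ g, ∀ p : ZMod 2, (DirectSum.decompose p0 x p : U0) ∈ g)
    (hgen : Algebra.adjoin K (g : Set U0) = ⊤)
    (a0_one : ∀ z : A ⊗[K] U0, a0 1 z = z)
    (hbA : ∀ (t p : ZMod 2) (z : g) (x : A), (z : U0) ∈ p0 t → x ∈ qA p → bA z x ∈ qA (t + p))
    (hbB : ∀ (t p : ZMod 2) (z : g) (x : B), (z : U0) ∈ p0 t → x ∈ qB p → bB z x ∈ qB (t + p))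
    (hi : ∀ (x : A) (y : B) (v : U0),
      m (x ⊗ₜ[K] 1) (y ⊗ₜ[K] v) = m (x ⊗ₜ[K] 1) (y ⊗ₜ[K] 1) * v)
    (hii : ∀ (t s : ZMod 2) (z : g), (z : U0) ∈ p0 t → ∀ y : B, y ∈ qB s →
      ∀ (x : A) (u v : U0),
      m (x ⊗ₜ[K] (u * (z : U0))) (y ⊗ₜ[K] v)
        = m (x ⊗ₜ[K] u) (bB z y ⊗ₜ[K] v)
          + ((-1 : K) ^ (s * t).val) • m (x ⊗ₜ[K] u) (y ⊗ₜ[K] ((z : U0) * v)))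
    (hii0 : ∀ (t s : ZMod 2) (z : g), (z : U0) ∈ p0 t → ∀ y : A, y ∈ qA s →
      ∀ u v : U0,
      a0 (u * (z : U0)) (y ⊗ₜ[K] v)
        = a0 u (bA z y ⊗ₜ[K] v)
          + ((-1 : K) ^ (s * t).val) • a0 u (y ⊗ₜ[K] ((z : U0) * v)))
    (hiii : ∀ (t sx sy : ZMod 2) (z : g), (z : U0) ∈ p0 t →
      ∀ x : A, x ∈ qA sx → ∀ y : B, y ∈ qB sy →
      (z : U0) * m (x ⊗ₜ[K] 1) (y ⊗ₜ[K] 1)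
        = m (bA z x ⊗ₜ[K] 1) (y ⊗ₜ[K] 1)
          + ((-1 : K) ^ (t * sx).val) • m (x ⊗ₜ[K] 1) (bB z y ⊗ₜ[K] 1)
          + ((-1 : K) ^ (t * (sx + sy)).val) • (m (x ⊗ₜ[K] 1) (y ⊗ₜ[K] 1) * (z : U0))) :
    (∀ (s : ZMod 2) (y : A), y ∈ qA s → ∀ u w v : U0,
      rmul (a0 u (y ⊗ₜ[K] w)) v = a0 u (y ⊗ₜ[K] (w * v))) ∧
    (∀ (sx : ZMod 2) (x : A), x ∈ qA sx → ∀ (sy : ZMod 2) (y : B), y ∈ qB sy →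
      ∀ u w v : U0,
      m (a0 u (x ⊗ₜ[K] w)) (y ⊗ₜ[K] v) = u * m (x ⊗ₜ[K] w) (y ⊗ₜ[K] v)) := by
  have rD : ∀ (a b : A ⊗[K] U0) (v : U0), rmul (a + b) v = rmul a v + rmul b v :=
    fun a b v => map_add (TensorProduct.map LinearMap.id (LinearMap.mulRight K v)) a b
  have rS : ∀ (c : K) (a : A ⊗[K] U0) (v : U0), rmul (c • a) v = c • rmul a v :=
    fun c a v => map_smul (TensorProduct.map LinearMap.id (LinearMap.mulRight K v)) c a
  have rT : ∀ (x : A) (w v : U0), rmul (x ⊗ₜ[K] w) v = x ⊗ₜ[K] (w * v) := by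
    intro x w v; simp [rmul]
  -- Claim C: z left-multiplies through the product
  have hC : ∀ w : U0, ∀ (t : ZMod 2) (z : g), (z : U0) ∈ p0 t →
      ∀ (sx : ZMod 2) (x : A), x ∈ qA sx → ∀ (sy : ZMod 2) (y : B), y ∈ qB sy → ∀ v : U0,
      (z : U0) * m (x ⊗ₜ[K] w) (y ⊗ₜ[K] v)
        = m (bA z x ⊗ₜ[K] w) (y ⊗ₜ[K] v)
          + ((-1 : K) ^ ((t * sx).val)) • m (x ⊗ₜ[K] ((z : U0) * w)) (y ⊗ₜ[K] v) := by
    apply adjoin_ind g hgen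
    · intro t z hz sx x hx sy y hy v
      simp
    · intro w1 w2 h1 h2 t z hz sx x hx sy y hy v
      simp only [TensorProduct.tmul_add, mul_add, map_add, LinearMap.add_apply, smul_add,
        h1 t z hz sx x hx sy y hy v, h2 t z hz sx x hx sy y hy v]
      abel
    · intro c w hw t z hz sx x hx sy y hy v
      simp only [mul_smul_comm, TensorProduct.tmul_smul, map_smul, LinearMap.smul_apply,
        hw t z hz sx x hx sy y hy v, smul_add]
      rw [smul_comm]
    · intro t z hz sx x hx sy y hy v
      have e2 := hii t sy z hz y hy x 1 v
      rw [one_mul] at e2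
      rw [mul_one, e2, hi x y v, ← mul_assoc, hiii t sx sy z hz x hx y hy,
        hi (bA z x) y v, hi x (bB z y) v, hi x y ((z : U0) * v)]
      rw [add_mul, add_mul, smul_mul_assoc, smul_mul_assoc, mul_assoc, smul_add, smul_smul,
        sgn_mul_sgn, show t * sx + sy * t = t * (sx + sy) by ring]
      module
    · intro w hw z' hz'
      refine homog_ind p0 g hgg (fun c => ∀ (t : ZMod 2) (z : g), (z : U0) ∈ p0 t →
        ∀ (sx : ZMod 2) (x : A), x ∈ qA sx → ∀ (sy : ZMod 2) (y : B), y ∈ qB sy → ∀ v : U0,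
        (z : U0) * m (x ⊗ₜ[K] (w * c)) (y ⊗ₜ[K] v)
          = m (bA z x ⊗ₜ[K] (w * c)) (y ⊗ₜ[K] v)
            + ((-1 : K) ^ ((t * sx).val)) • m (x ⊗ₜ[K] ((z : U0) * (w * c))) (y ⊗ₜ[K] v))
        ?_ ?_ ?_ z' hz'
      · intro t z hz sx x hx sy y hy v; simp
      · intro a b ha hb t z hz sx x hx sy y hy v
        simp only [mul_add, TensorProduct.tmul_add, map_add, LinearMap.add_apply, smul_add,
          ha t z hz sx x hx sy y hy v, hb t z hz sx x hx sy y hy v]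
        abel
      · intro t' c hcg hct t z hz sx x hx sy y hy v
        have key := hii t' sy ⟨c, hcg⟩ hct y hy
        rw [key x w v, key (bA z x) w v, ← mul_assoc, key x ((z : U0) * w) v,
          mul_add, mul_smul_comm,
          hw t z hz sx x hx (t' + sy) (bB ⟨c, hcg⟩ y) (hbB t' sy ⟨c, hcg⟩ y hct hy) v,
          hw t z hz sx x hx sy y hy (c * v)]
        module
  have hP : ∀ u : U0, ∀ (s : ZMod 2) (y : A), y ∈ qA s → ∀ w v : U0,
      rmul (a0 u (y ⊗ₜ[K] w)) v = a0 u (y ⊗ₜ[K] (w * v)) := by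
    apply adjoin_ind g hgen
    · intro s y hy w v; simp [rmul]
    · intro u1 u2 h1 h2 s y hy w v
      simp only [map_add, LinearMap.add_apply, rD,
        h1 s y hy w v, h2 s y hy w v]
    · intro c u hu s y hy w v
      simp only [map_smul, LinearMap.smul_apply, rS, hu s y hy w v]
    · intro s y hy w v
      rw [a0_one, a0_one, rT]
    · intro u hu z' hz'
      refine homog_ind p0 g hgg (fun c => ∀ (s : ZMod 2) (y : A), y ∈ qA s → ∀ w v : U0,
        rmul (a0 (u * c) (y ⊗ₜ[K] w)) v = a0 (u * c) (y ⊗ₜ[K] (w * v))) ?_ ?_ ?_ z' hz'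
      · intro s y hy w v; simp [rmul]
      · intro a b ha hb s y hy w v
        simp only [mul_add, map_add, LinearMap.add_apply, rD,
          ha s y hy w v, hb s y hy w v]
      · intro t c hcg hct s y hy w v
        rw [hii0 t s ⟨c, hcg⟩ hct y hy u w, hii0 t s ⟨c, hcg⟩ hct y hy u (w * v),
          rD, rS, hu (t + s) (bA ⟨c, hcg⟩ y) (hbA t s ⟨c, hcg⟩ y hct hy) w v,
          hu s y hy (c * w) v, ← mul_assoc]
  have hQ : ∀ u : U0, ∀ (sx : ZMod 2) (x : A), x ∈ qA sx →
      ∀ (sy : ZMod 2) (y : B), y ∈ qB sy → ∀ w v : U0,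
      m (a0 u (x ⊗ₜ[K] w)) (y ⊗ₜ[K] v) = u * m (x ⊗ₜ[K] w) (y ⊗ₜ[K] v) := by
    apply adjoin_ind g hgen
    · intro sx x hx sy y hy w v; simp
    · intro u1 u2 h1 h2 sx x hx sy y hy w v
      simp only [map_add, LinearMap.add_apply, add_mul,
        h1 sx x hx sy y hy w v, h2 sx x hx sy y hy w v]
    · intro c u hu sx x hx sy y hy w v
      simp only [map_smul, LinearMap.smul_apply, smul_mul_assoc, hu sx x hx sy y hy w v]
    · intro sx x hx sy y hy w v
      rw [a0_one, one_mul]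
    · intro u hu z' hz'
      refine homog_ind p0 g hgg (fun c => ∀ (sx : ZMod 2) (x : A), x ∈ qA sx →
        ∀ (sy : ZMod 2) (y : B), y ∈ qB sy → ∀ w v : U0,
        m (a0 (u * c) (x ⊗ₜ[K] w)) (y ⊗ₜ[K] v)
          = (u * c) * m (x ⊗ₜ[K] w) (y ⊗ₜ[K] v)) ?_ ?_ ?_ z' hz'
      · intro sx x hx sy y hy w v; simp
      · intro a b ha hb sx x hx sy y hy w v
        simp only [mul_add, add_mul, map_add, LinearMap.add_apply,
          ha sx x hx sy y hy w v, hb sx x hx sy y hy w v]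
      · intro t c hcg hct sx x hx sy y hy w v
        rw [hii0 t sx ⟨c, hcg⟩ hct x hx u w, map_add, LinearMap.add_apply,
          map_smul, LinearMap.smul_apply,
          hu sx x hx sy y hy (c * w) v,
          hu (t + sx) (bA ⟨c, hcg⟩ x) (hbA t sx ⟨c, hcg⟩ x hct hx) sy y hy w v,
          mul_assoc, hC w t ⟨c, hcg⟩ hct sx x hx sy y hy v,
          mul_comm sx t, mul_add, mul_smul_comm]
  exact ⟨fun s y hy u w v => hP u s y hy w v,
    fun sx x hx sy y hy u w v => hQ u sx x hx sy y hy w v⟩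

/-- Assuming additionally (iii):
`z(xy) = ⟦z,x⟧y + (−1)^{|z||x|} x⟦z,y⟧ + (−1)^{|z|(|x|+|y|)}(xy)z`
for parity-homogeneous `z ∈ g`, `x ∈ G_{±1}`, `y ∈ G_{∓1}`, the identities
`(u(y⊗1))v = u(y⊗v)` and `(u(x⊗1))(y⊗v) = u((xy)v)` hold for all `u, v ∈ U₀` and
parity-homogeneous `x ∈ K ⊕ G_{±1}`, `y ∈ K ⊕ G_{∓1}` (stated case by case according to
whether `x`, `y` lie in `K` or in `G_{±1}`). -/
theorem lemma_identities_of_contextHyps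
    (K : Type*) [Field K] [CharZero K]
    (U0 : Type*) [Ring U0] [Algebra K U0]
    (p0 : ZMod 2 → Submodule K U0) [GradedAlgebra p0]
    (g : Submodule K U0)
    (G1 Gm : Type*) [AddCommGroup G1] [Module K G1] [AddCommGroup Gm] [Module K Gm]
    (q1 : ZMod 2 → Submodule K G1) (qm : ZMod 2 → Submodule K Gm)
    [DirectSum.Decomposition q1] [DirectSum.Decomposition qm]
    (mpm : G1 ⊗[K] U0 →ₗ[K] Gm ⊗[K] U0 →ₗ[K] U0)
    (mmp : Gm ⊗[K] U0 →ₗ[K] G1 ⊗[K] U0 →ₗ[K] U0)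
    (a0p : U0 →ₗ[K] G1 ⊗[K] U0 →ₗ[K] G1 ⊗[K] U0)
    (a0m : U0 →ₗ[K] Gm ⊗[K] U0 →ₗ[K] Gm ⊗[K] U0)
    (b1 : g →ₗ[K] G1 →ₗ[K] G1)
    (bm : g →ₗ[K] Gm →ₗ[K] Gm)
    (hyp : ContextHyps K U0 p0 g G1 Gm q1 qm mpm mmp a0p a0m b1 bm)
    -- assumption (iii), case x ∈ G₁, y ∈ G₋₁:
    (hiii_pm : ∀ (t sx sy : ZMod 2) (z : g), (z : U0) ∈ p0 t →
      ∀ x : G1, x ∈ q1 sx → ∀ y : Gm, y ∈ qm sy →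
      (z : U0) * mpm (x ⊗ₜ[K] 1) (y ⊗ₜ[K] 1)
        = mpm (b1 z x ⊗ₜ[K] 1) (y ⊗ₜ[K] 1)
          + ((-1 : K) ^ (t * sx).val) • mpm (x ⊗ₜ[K] 1) (bm z y ⊗ₜ[K] 1)
          + ((-1 : K) ^ (t * (sx + sy)).val) • (mpm (x ⊗ₜ[K] 1) (y ⊗ₜ[K] 1) * (z : U0)))
    -- assumption (iii), case x ∈ G₋₁, y ∈ G₁:
    (hiii_mp : ∀ (t sx sy : ZMod 2) (z : g), (z : U0) ∈ p0 t →
      ∀ x : Gm, x ∈ qm sx → ∀ y : G1, y ∈ q1 sy →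
      (z : U0) * mmp (x ⊗ₜ[K] 1) (y ⊗ₜ[K] 1)
        = mmp (bm z x ⊗ₜ[K] 1) (y ⊗ₜ[K] 1)
          + ((-1 : K) ^ (t * sx).val) • mmp (x ⊗ₜ[K] 1) (b1 z y ⊗ₜ[K] 1)
          + ((-1 : K) ^ (t * (sx + sy)).val) • (mmp (x ⊗ₜ[K] 1) (y ⊗ₜ[K] 1) * (z : U0))) :
    -- first identity `(u(y⊗1))v = u(y⊗v)`, case y ∈ G₁
    (∀ y : G1, (∃ s, y ∈ q1 s) → ∀ u v : U0,
      rmul (a0p u (y ⊗ₜ[K] 1)) v = a0p u (y ⊗ₜ[K] v)) ∧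
    -- first identity, case y ∈ G₋₁
    (∀ y : Gm, (∃ s, y ∈ qm s) → ∀ u v : U0,
      rmul (a0m u (y ⊗ₜ[K] 1)) v = a0m u (y ⊗ₜ[K] v)) ∧
    -- first identity, case y = c ∈ K
    (∀ (c : K) (u v : U0), (u * (c • (1 : U0))) * v = u * (c • v)) ∧
    -- second identity `(u(x⊗1))(y⊗v) = u((xy)v)`, case x ∈ G₁, y ∈ G₋₁
    (∀ x : G1, (∃ s, x ∈ q1 s) → ∀ y : Gm, (∃ s, y ∈ qm s) → ∀ u v : U0,
      mpm (a0p u (x ⊗ₜ[K] 1)) (y ⊗ₜ[K] v)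
        = u * (mpm (x ⊗ₜ[K] 1) (y ⊗ₜ[K] 1) * v)) ∧
    -- second identity, case x ∈ G₋₁, y ∈ G₁
    (∀ x : Gm, (∃ s, x ∈ qm s) → ∀ y : G1, (∃ s, y ∈ q1 s) → ∀ u v : U0,
      mmp (a0m u (x ⊗ₜ[K] 1)) (y ⊗ₜ[K] v)
        = u * (mmp (x ⊗ₜ[K] 1) (y ⊗ₜ[K] 1) * v)) ∧
    -- second identity, case x = c ∈ K, y ∈ G₁
    (∀ (c : K) (y : G1), (∃ s, y ∈ q1 s) → ∀ u v : U0,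
      a0p (u * (c • (1 : U0))) (y ⊗ₜ[K] v) = a0p u ((c • y) ⊗ₜ[K] v)) ∧
    -- second identity, case x = c ∈ K, y ∈ G₋₁
    (∀ (c : K) (y : Gm), (∃ s, y ∈ qm s) → ∀ u v : U0,
      a0m (u * (c • (1 : U0))) (y ⊗ₜ[K] v) = a0m u ((c • y) ⊗ₜ[K] v)) ∧
    -- second identity, case x ∈ G₁, y = c ∈ K
    (∀ x : G1, (∃ s, x ∈ q1 s) → ∀ (c : K) (u v : U0),
      rmul (a0p u (x ⊗ₜ[K] 1)) (c • v) = a0p u ((c • x) ⊗ₜ[K] v)) ∧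
    -- second identity, case x ∈ G₋₁, y = c ∈ K
    (∀ x : Gm, (∃ s, x ∈ qm s) → ∀ (c : K) (u v : U0),
      rmul (a0m u (x ⊗ₜ[K] 1)) (c • v) = a0m u ((c • x) ⊗ₜ[K] v)) ∧
    -- second identity, case x = c ∈ K, y = c' ∈ K
    (∀ (c c' : K) (u v : U0),
      (u * (c • (1 : U0))) * (c' • v) = u * ((c * c') • v)) := by
  obtain ⟨hP1, hQ1⟩ := main_aux p0 g q1 qm mpm a0p b1 bm hyp.g_graded hyp.g_gen
    hyp.a0p_one hyp.b1_par hyp.bm_par hyp.i_pm hyp.ii_pm hyp.ii_0p hiii_pm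
  obtain ⟨hP2, hQ2⟩ := main_aux p0 g qm q1 mmp a0m bm b1 hyp.g_graded hyp.g_gen
    hyp.a0m_one hyp.bm_par hyp.b1_par hyp.i_mp hyp.ii_mp hyp.ii_0m hiii_mp
  refine ⟨?_, ?_, ?_, ?_, ?_, ?_, ?_, ?_, ?_, ?_⟩
  · rintro y ⟨s, hy⟩ u v
    have h := hP1 s y hy u 1 v
    rwa [one_mul] at h
  · rintro y ⟨s, hy⟩ u v
    have h := hP2 s y hy u 1 v
    rwa [one_mul] at h
  · intro c u v
    rw [mul_smul_comm, mul_one, smul_mul_assoc, mul_smul_comm]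
  · rintro x ⟨sx, hx⟩ y ⟨sy, hy⟩ u v
    rw [hQ1 sx x hx sy y hy u 1 v, hyp.i_pm x y v]
  · rintro x ⟨sx, hx⟩ y ⟨sy, hy⟩ u v
    rw [hQ2 sx x hx sy y hy u 1 v, hyp.i_mp x y v]
  · intro c y _ u v
    rw [mul_smul_comm, mul_one, map_smul, LinearMap.smul_apply,
      ← TensorProduct.smul_tmul', map_smul]
  · intro c y _ u v
    rw [mul_smul_comm, mul_one, map_smul, LinearMap.smul_apply,
      ← TensorProduct.smul_tmul', map_smul]
  · rintro x ⟨s, hx⟩ c u v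
    have h := hP1 s x hx u 1 (c • v)
    rw [one_mul] at h
    rw [h, TensorProduct.smul_tmul]
  · rintro x ⟨s, hx⟩ c u v
    have h := hP2 s x hx u 1 (c • v)
    rw [one_mul] at h
    rw [h, TensorProduct.smul_tmul]
  · intro c c' u v
    rw [mul_smul_comm c u 1, mul_one, smul_mul_assoc, mul_smul_comm c' u v, smul_smul,
      mul_smul_comm (c * c') u v]
end

section
/- Under assumptions (i) and (ii), every element of U_{±1} = G_{±1} ⊗ U₀ can be written as a finite sum of elements of the form u(x ⊗ 1) with u ∈ U₀ and x ∈ G_{±1} (products via the map U₀ × U_{±1} → U_{±1}). -/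
open scoped TensorProduct

/-! The `K`-span `M` of the elements `u(x ⊗ 1)` is everything. Call `w ∈ U₀` good if
`u(y ⊗ w) ∈ M` for all `u ∈ U₀` and homogeneous `y ∈ G`. Then `1` is good, and for homogeneous
`z ∈ g` assumption (ii), read as `±u(y ⊗ zw) = (uz)(y ⊗ w) - u(⟦z,y⟧ ⊗ w)`, shows that `zw` is
good whenever `w` is. As `g` is graded and generates `U₀`, every `w` is good, and `u = 1` gives
`y ⊗ w ∈ M`. Since `c(u(x ⊗ 1)) = u(cx ⊗ 1)`, the span `M` is just the additive closure. -/

section LeftActionSpan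

variable {K U0 G : Type*} [Field K] [Ring U0] [Algebra K U0] [AddCommGroup G] [Module K G]
  (a0 : U0 →ₗ[K] G ⊗[K] U0 →ₗ[K] G ⊗[K] U0)

def leftActionSpan : Submodule K (G ⊗[K] U0) :=
  Submodule.span K {w | ∃ (u : U0) (x : G), w = a0 u (x ⊗ₜ[K] 1)}

def goodRightFactors (q : ZMod 2 → Submodule K G) : Submodule K U0 where
  carrier := {w | ∀ (u : U0) (s : ZMod 2) (y : G), y ∈ q s →
    a0 u (y ⊗ₜ[K] w) ∈ leftActionSpan a0}
  add_mem' hw hw' u s y hy := by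
    rw [TensorProduct.tmul_add, map_add]
    exact add_mem (hw u s y hy) (hw' u s y hy)
  zero_mem' u s y _ := by
    rw [TensorProduct.tmul_zero, map_zero]
    exact zero_mem _
  smul_mem' c w hw u s y hy := by
    rw [TensorProduct.tmul_smul, map_smul]
    exact Submodule.smul_mem _ c (hw u s y hy)

lemma leftActionSpan_toAddSubmonoid :
    (leftActionSpan a0).toAddSubmonoid
      = AddSubmonoid.closure {w | ∃ (u : U0) (x : G), w = a0 u (x ⊗ₜ[K] 1)} := by
  refine le_antisymm ?_ Submodule.closure_le_toAddSubmonoid_span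
  rw [leftActionSpan, Submodule.span_eq_closure]
  refine AddSubmonoid.closure_mono ?_
  rintro - ⟨c, -, -, ⟨u, x, rfl⟩, rfl⟩
  exact ⟨u, c • x,
    (map_smul (a0 u) c _).symm.trans (congrArg (a0 u) (TensorProduct.smul_tmul' c x 1))⟩

variable {a0} {q : ZMod 2 → Submodule K G}

lemma one_mem_goodRightFactors : (1 : U0) ∈ goodRightFactors a0 q :=
  fun u _ y _ => Submodule.subset_span ⟨u, y, rfl⟩

variable {g : Submodule K U0} {p0 : ZMod 2 → Submodule K U0} {b : g →ₗ[K] G →ₗ[K] G}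
  (hb : ∀ (t p : ZMod 2) (z : g) (x : G), (z : U0) ∈ p0 t → x ∈ q p → b z x ∈ q (t + p))
  (hii : ∀ (t s : ZMod 2) (z : g), (z : U0) ∈ p0 t → ∀ y : G, y ∈ q s → ∀ u v : U0,
    a0 (u * (z : U0)) (y ⊗ₜ[K] v)
      = a0 u (b z y ⊗ₜ[K] v) + ((-1 : K) ^ (s * t).val) • a0 u (y ⊗ₜ[K] ((z : U0) * v)))
include hb hii

lemma mul_mem_goodRightFactors_of_mem {t : ZMod 2} (z : g) (hz : (z : U0) ∈ p0 t) {w : U0}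
    (hw : w ∈ goodRightFactors a0 q) : (z : U0) * w ∈ goodRightFactors a0 q := by
  intro u s y hy
  have hsign : IsUnit ((-1 : K) ^ (s * t).val) := (isUnit_one.neg).pow _
  have hdiff : ((-1 : K) ^ (s * t).val) • a0 u (y ⊗ₜ[K] ((z : U0) * w))
      = a0 (u * (z : U0)) (y ⊗ₜ[K] w) - a0 u (b z y ⊗ₜ[K] w) := by
    rw [hii t s z hz y hy u w, add_sub_cancel_left]
  rw [← Submodule.smul_mem_iff_of_isUnit _ hsign, hdiff]
  exact sub_mem (hw _ s y hy) (hw u _ _ (hb t s z y hz hy))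

lemma mul_mem_goodRightFactors [GradedAlgebra p0]
    (hg : DirectSum.SetLike.IsHomogeneous p0 g)
    {z : U0} (hz : z ∈ g) {w : U0} (hw : w ∈ goodRightFactors a0 q) :
    z * w ∈ goodRightFactors a0 q := by
  classical
  rw [← DirectSum.sum_support_decompose p0 z, Finset.sum_mul]
  exact Submodule.sum_mem _ fun t _ =>
    mul_mem_goodRightFactors_of_mem hb hii ⟨_, hg t hz⟩ (SetLike.coe_mem _) hw

lemma goodRightFactors_eq_top [GradedAlgebra p0]
    (hg : DirectSum.SetLike.IsHomogeneous p0 g)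
    (hgen : Algebra.adjoin K (g : Set U0) = ⊤) : goodRightFactors a0 q = ⊤ := by
  suffices hmul : ∀ v : U0, ∀ w ∈ goodRightFactors a0 q, v * w ∈ goodRightFactors a0 q from
    eq_top_iff.mpr fun v _ => mul_one v ▸ hmul v 1 one_mem_goodRightFactors
  intro v
  induction (hgen ▸ Algebra.mem_top : v ∈ Algebra.adjoin K (g : Set U0))
    using Algebra.adjoin_induction with
  | mem z hz => exact fun w => mul_mem_goodRightFactors hb hii hg hz
  | algebraMap c =>
    intro w hw
    rw [Algebra.algebraMap_eq_smul_one, smul_one_mul]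
    exact Submodule.smul_mem _ c hw
  | add x y _ _ hx hy => exact fun w hw => add_mul x y w ▸ add_mem (hx w hw) (hy w hw)
  | mul x y _ _ hx hy => exact fun w hw => (mul_assoc x y w).symm ▸ hx _ (hy w hw)

lemma leftActionSpan_eq_top [GradedAlgebra p0] [DirectSum.Decomposition q]
    (hg : DirectSum.SetLike.IsHomogeneous p0 g)
    (hgen : Algebra.adjoin K (g : Set U0) = ⊤) (hone : ∀ z : G ⊗[K] U0, a0 1 z = z) :
    leftActionSpan a0 = ⊤ := by
  have hgood := goodRightFactors_eq_top hb hii hg hgen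
  have htmul : ∀ (x : G) (v : U0), x ⊗ₜ[K] v ∈ leftActionSpan a0 := by
    intro x v
    induction x using DirectSum.Decomposition.inductionOn q with
    | zero => rw [TensorProduct.zero_tmul]; exact zero_mem _
    | homogeneous y =>
      have hv : v ∈ goodRightFactors a0 q := hgood ▸ Submodule.mem_top
      exact hone (y ⊗ₜ[K] v) ▸ hv 1 _ y y.2
    | add x x' hx hx' => rw [TensorProduct.add_tmul]; exact add_mem hx hx'
  rw [eq_top_iff, ← TensorProduct.span_tmul_eq_top, Submodule.span_le]
  rintro - ⟨x, v, rfl⟩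
  exact htmul x v

end LeftActionSpan

theorem mem_closure_smul_of_contextHyps_general
    (K : Type*) [Field K]
    (U0 : Type*) [Ring U0] [Algebra K U0]
    (p0 : ZMod 2 → Submodule K U0) [GradedAlgebra p0]
    (g : Submodule K U0)
    (G1 Gm : Type*) [AddCommGroup G1] [Module K G1] [AddCommGroup Gm] [Module K Gm]
    (q1 : ZMod 2 → Submodule K G1) (qm : ZMod 2 → Submodule K Gm)
    [DirectSum.Decomposition q1] [DirectSum.Decomposition qm]
    (mpm : G1 ⊗[K] U0 →ₗ[K] Gm ⊗[K] U0 →ₗ[K] U0)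
    (mmp : Gm ⊗[K] U0 →ₗ[K] G1 ⊗[K] U0 →ₗ[K] U0)
    (a0p : U0 →ₗ[K] G1 ⊗[K] U0 →ₗ[K] G1 ⊗[K] U0)
    (a0m : U0 →ₗ[K] Gm ⊗[K] U0 →ₗ[K] Gm ⊗[K] U0)
    (b1 : g →ₗ[K] G1 →ₗ[K] G1)
    (bm : g →ₗ[K] Gm →ₗ[K] Gm)
    (hyp : ContextHyps K U0 p0 g G1 Gm q1 qm mpm mmp a0p a0m b1 bm) :
    (∀ z : G1 ⊗[K] U0,
      z ∈ AddSubmonoid.closure {w : G1 ⊗[K] U0 | ∃ (u : U0) (x : G1), w = a0p u (x ⊗ₜ[K] 1)}) ∧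
    (∀ z : Gm ⊗[K] U0,
      z ∈ AddSubmonoid.closure {w : Gm ⊗[K] U0 | ∃ (u : U0) (x : Gm), w = a0m u (x ⊗ₜ[K] 1)}) := by
  have hg : DirectSum.SetLike.IsHomogeneous p0 g := fun p _ hx => hyp.g_graded _ hx p
  have h1 := leftActionSpan_eq_top hyp.b1_par hyp.ii_0p hg hyp.g_gen hyp.a0p_one
  have hm := leftActionSpan_eq_top hyp.bm_par hyp.ii_0m hg hyp.g_gen hyp.a0m_one
  refine ⟨fun z => ?_, fun z => ?_⟩
  · rw [← leftActionSpan_toAddSubmonoid, h1]; exact Submodule.mem_top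
  · rw [← leftActionSpan_toAddSubmonoid, hm]; exact Submodule.mem_top

/-- Under assumptions (i) and (ii), every element of `U_{±1} = G_{±1} ⊗ U₀`
is a finite sum of elements of the form `u(x ⊗ 1)` with `u ∈ U₀` and `x ∈ G_{±1}`. -/
theorem mem_closure_smul_of_contextHyps
    (K : Type*) [Field K] [CharZero K]
    (U0 : Type*) [Ring U0] [Algebra K U0]
    (p0 : ZMod 2 → Submodule K U0) [GradedAlgebra p0]
    (g : Submodule K U0)
    (G1 Gm : Type*) [AddCommGroup G1] [Module K G1] [AddCommGroup Gm] [Module K Gm]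
    (q1 : ZMod 2 → Submodule K G1) (qm : ZMod 2 → Submodule K Gm)
    [DirectSum.Decomposition q1] [DirectSum.Decomposition qm]
    (mpm : G1 ⊗[K] U0 →ₗ[K] Gm ⊗[K] U0 →ₗ[K] U0)
    (mmp : Gm ⊗[K] U0 →ₗ[K] G1 ⊗[K] U0 →ₗ[K] U0)
    (a0p : U0 →ₗ[K] G1 ⊗[K] U0 →ₗ[K] G1 ⊗[K] U0)
    (a0m : U0 →ₗ[K] Gm ⊗[K] U0 →ₗ[K] Gm ⊗[K] U0)
    (b1 : g →ₗ[K] G1 →ₗ[K] G1)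
    (bm : g →ₗ[K] Gm →ₗ[K] Gm)
    (hyp : ContextHyps K U0 p0 g G1 Gm q1 qm mpm mmp a0p a0m b1 bm) :
    (∀ z : G1 ⊗[K] U0,
      z ∈ AddSubmonoid.closure {w : G1 ⊗[K] U0 | ∃ (u : U0) (x : G1), w = a0p u (x ⊗ₜ[K] 1)}) ∧
    (∀ z : Gm ⊗[K] U0,
      z ∈ AddSubmonoid.closure {w : Gm ⊗[K] U0 | ∃ (u : U0) (x : Gm), w = a0m u (x ⊗ₜ[K] 1)}) :=
  mem_closure_smul_of_contextHyps_general K U0 p0 g G1 Gm q1 qm mpm mmp a0p a0m b1 bm hyp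
end

section
/- Let K be a field, r ≥ 1, and B an invertible (r+1)×(r+1) matrix over K with rows and columns indexed by {0,1,…,r}, such that B₀₀ = 0. Let d₀,…,d_r ∈ K be nonzero with d₀ = 1 and d_I^{−1} B_{IJ} = d_J^{−1} B_{JI} for all I, J ∈ {0,1,…,r} (B is symmetrisable with symmetriser d). Then Σ_{i,j=1}^{r} d_i^{−1} B_{ij} (B^{−1})_{i0} (B^{−1})_{j0} = −(B^{−1})₀₀. In particular, if (B^{−1})₀₀ ≠ 0 and x_i := (B^{−1})_{i0}/(B^{−1})₀₀, then Σ_{i,j=1}^{r} d_i^{−1} B_{ij} x_i x_j = −1/(B^{−1})₀₀. -/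
/-!
With weights `c` satisfying `c I * B I J = c J * B J I`, the form
`Q x y = ∑ I J, c I * B I J * x I * y J` is symmetric. For the column `v` of `B⁻¹` indexed by
`i₀` we have `B *ᵥ v = Pi.single i₀ 1`, so `Q v v = c i₀ * v i₀`. The border row `I = i₀`
contributes `c i₀ * v i₀ * (B *ᵥ v) i₀ = c i₀ * v i₀`, and by symmetry so does the border
column `J = i₀, I ≠ i₀` once `B i₀ i₀ = 0`; hence the interior sum is `-(c i₀ * v i₀)`.
-/

open Finset Matrix

namespace Matrix

section Symmetrisable

variable {ι R : Type*} [Fintype ι] [DecidableEq ι] [CommRing R]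
  {B : Matrix ι ι R} {c v : ι → R} {i₀ : ι}

lemma sum_sum_weighted_eq_of_mulVec_eq_single
    (hsym : ∀ I J, c I * B I J = c J * B J I) (hv : B *ᵥ v = Pi.single i₀ 1) :
    ∑ I, ∑ J, c I * B I J * v I * v J = c i₀ * v i₀ := by
  have hcol : ∀ J, ∑ I, c I * B I J * v I * v J = c J * v J * (B *ᵥ v) J := by
    intro J
    simp only [mulVec_apply_eq_sum, Finset.mul_sum]
    refine Finset.sum_congr rfl fun I _ => ?_
    linear_combination v I * v J * hsym I J
  rw [Finset.sum_comm, Finset.sum_congr rfl fun J _ => hcol J, hv]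
  simp [Pi.single_apply]

lemma sum_weighted_row_eq_of_mulVec_eq_single (hv : B *ᵥ v = Pi.single i₀ 1) :
    ∑ J, c i₀ * B i₀ J * v i₀ * v J = c i₀ * v i₀ := by
  have hrow : ∑ J, B i₀ J * v J = 1 := by simpa [mulVec_apply_eq_sum] using congrFun hv i₀
  calc ∑ J, c i₀ * B i₀ J * v i₀ * v J = c i₀ * v i₀ * ∑ J, B i₀ J * v J := by
        rw [Finset.mul_sum]; exact Finset.sum_congr rfl fun J _ => by ring
    _ = c i₀ * v i₀ := by rw [hrow, mul_one]

lemma sum_erase_weighted_col_eq_of_mulVec_eq_single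
    (hsym : ∀ I J, c I * B I J = c J * B J I) (hv : B *ᵥ v = Pi.single i₀ 1)
    (hB : B i₀ i₀ = 0) :
    ∑ I ∈ univ.erase i₀, c I * B I i₀ * v I * v i₀ = c i₀ * v i₀ := by
  have hrow : ∑ J ∈ univ.erase i₀, B i₀ J * v J = 1 := by
    rw [Finset.sum_erase_eq_sub (mem_univ _), hB, zero_mul, sub_zero]
    simpa [mulVec_apply_eq_sum] using congrFun hv i₀
  calc ∑ I ∈ univ.erase i₀, c I * B I i₀ * v I * v i₀
      = c i₀ * v i₀ * ∑ I ∈ univ.erase i₀, B i₀ I * v I := by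
        rw [Finset.mul_sum]
        exact Finset.sum_congr rfl fun I _ => by linear_combination v I * v i₀ * hsym I i₀
    _ = c i₀ * v i₀ := by rw [hrow, mul_one]

theorem sum_erase_sum_erase_weighted_eq_neg_of_mulVec_eq_single
    (hsym : ∀ I J, c I * B I J = c J * B J I) (hv : B *ᵥ v = Pi.single i₀ 1)
    (hB : B i₀ i₀ = 0) :
    ∑ i ∈ univ.erase i₀, ∑ j ∈ univ.erase i₀, c i * B i j * v i * v j = -(c i₀ * v i₀) := by
  have hsplit : ∑ I, ∑ J, c I * B I J * v I * v J
      = ∑ J, c i₀ * B i₀ J * v i₀ * v J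
        + ∑ I ∈ univ.erase i₀, c I * B I i₀ * v I * v i₀
        + ∑ i ∈ univ.erase i₀, ∑ j ∈ univ.erase i₀, c i * B i j * v i * v j := by
    rw [← Finset.add_sum_erase _ _ (mem_univ i₀), add_assoc, ← Finset.sum_add_distrib]
    congr 2 with I
    rw [← Finset.add_sum_erase _ _ (mem_univ i₀)]
  rw [sum_sum_weighted_eq_of_mulVec_eq_single hsym hv,
    sum_weighted_row_eq_of_mulVec_eq_single hv,
    sum_erase_weighted_col_eq_of_mulVec_eq_single hsym hv hB] at hsplit
  linear_combination -hsplit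

end Symmetrisable

end Matrix

theorem symmetrisable_matrix_inverse_sum_identity_general
    (K : Type*) [Field K] (r : ℕ)
    (B : Matrix (Fin (r + 1)) (Fin (r + 1)) K)
    (hB : IsUnit B.det)
    (hB00 : B 0 0 = 0)
    (d : Fin (r + 1) → K) (hd0 : d 0 = 1)
    (hsym : ∀ I J, (d I)⁻¹ * B I J = (d J)⁻¹ * B J I) :
    (∑ i ∈ Finset.univ.erase 0, ∑ j ∈ Finset.univ.erase 0,
        (d i)⁻¹ * B i j * B⁻¹ i 0 * B⁻¹ j 0) = -(B⁻¹ 0 0) ∧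
    (B⁻¹ 0 0 ≠ 0 →
      (∑ i ∈ Finset.univ.erase 0, ∑ j ∈ Finset.univ.erase 0,
          (d i)⁻¹ * B i j * (B⁻¹ i 0 / B⁻¹ 0 0) * (B⁻¹ j 0 / B⁻¹ 0 0)) = -1 / B⁻¹ 0 0) := by
  have hv : B *ᵥ (fun I => B⁻¹ I 0) = Pi.single 0 1 := by
    ext I
    rw [mulVec_apply_eq_sum, ← mul_apply, mul_nonsing_inv B hB, one_apply, Pi.single_apply]
  have hmain := sum_erase_sum_erase_weighted_eq_neg_of_mulVec_eq_single hsym hv hB00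
  rw [hd0, inv_one, one_mul] at hmain
  refine ⟨hmain, fun h00 => ?_⟩
  calc ∑ i ∈ univ.erase 0, ∑ j ∈ univ.erase 0,
        (d i)⁻¹ * B i j * (B⁻¹ i 0 / B⁻¹ 0 0) * (B⁻¹ j 0 / B⁻¹ 0 0)
      = (∑ i ∈ univ.erase 0, ∑ j ∈ univ.erase 0, (d i)⁻¹ * B i j * B⁻¹ i 0 * B⁻¹ j 0)
          / B⁻¹ 0 0 ^ 2 := by
        simp only [Finset.sum_div]
        congr! 2 with i _ j _
        ring
    _ = -1 / B⁻¹ 0 0 := by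
        rw [hmain]
        field_simp

/-- Let `B` be an invertible `(r+1)×(r+1)` matrix over a field `K`, indexed
by `{0,1,…,r}`, with `B₀₀ = 0`, symmetrisable with symmetriser `d` (`d_I ≠ 0`, `d₀ = 1`,
`d_I⁻¹ B_{IJ} = d_J⁻¹ B_{JI}`). Then
`Σ_{i,j=1}^r d_i⁻¹ B_{ij} (B⁻¹)_{i0} (B⁻¹)_{j0} = −(B⁻¹)₀₀`, and if `(B⁻¹)₀₀ ≠ 0` and
`x_i = (B⁻¹)_{i0}/(B⁻¹)₀₀`, then `Σ_{i,j=1}^r d_i⁻¹ B_{ij} x_i x_j = −1/(B⁻¹)₀₀`. -/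
theorem symmetrisable_matrix_inverse_sum_identity
    (K : Type*) [Field K] (r : ℕ) (hr : 1 ≤ r)
    (B : Matrix (Fin (r + 1)) (Fin (r + 1)) K)
    (hB : IsUnit B.det)
    (hB00 : B 0 0 = 0)
    (d : Fin (r + 1) → K) (hd : ∀ I, d I ≠ 0) (hd0 : d 0 = 1)
    (hsym : ∀ I J, (d I)⁻¹ * B I J = (d J)⁻¹ * B J I) :
    (∑ i ∈ Finset.univ.erase 0, ∑ j ∈ Finset.univ.erase 0,
        (d i)⁻¹ * B i j * B⁻¹ i 0 * B⁻¹ j 0) = -(B⁻¹ 0 0) ∧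
    (B⁻¹ 0 0 ≠ 0 →
      (∑ i ∈ Finset.univ.erase 0, ∑ j ∈ Finset.univ.erase 0,
          (d i)⁻¹ * B i j * (B⁻¹ i 0 / B⁻¹ 0 0) * (B⁻¹ j 0 / B⁻¹ 0 0)) = -1 / B⁻¹ 0 0) :=
  symmetrisable_matrix_inverse_sum_identity_general K r B hB hB00 d hd0 hsym
end
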